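/- For any partition λ of n, the maximal number of pairwise non-attacking rooks that can be placed on the Ferrers board of λ (no two in the same row or column, each rook on a cell of the board) equals the Durfee triangle size of λ, i.e., the largest k such that λ_i ≥ k + 1 - i for all 1 ≤ i ≤ k. -/
import Mathlib

/-- The `i`-th largest part (1-indexed) of a partition, or `0` if out of range. -/
def part {n : ℕ} (p : n.Partition) (i : ℕ) : ℕ :=
  (p.parts.sort (· ≥ ·)).getD (i - 1) 0

open Classical in
/-- The size of the Durfee triangle of a partition: the largest `k` such that
`λ_i ≥ k + 1 - i` for all `1 ≤ i ≤ k`. -/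
noncomputable def durfee {n : ℕ} (p : n.Partition) : ℕ :=
  Nat.findGreatest (fun k => ∀ i ∈ Finset.Icc 1 k, k + 1 ≤ part p i + i) n

open Classical in
/-- `R k n` : the number of partitions of `n` with Durfee triangle size exactly `k`. -/
noncomputable def R (k n : ℕ) : ℕ :=
  (Finset.univ.filter fun p : n.Partition => durfee p = k).card

/-- The partition function. -/
def P (n : ℕ) : ℕ := Fintype.card n.Partition

/-- The maximal Durfee triangle size among partitions of `n`. -/
noncomputable def F (n : ℕ) : ℕ := Finset.univ.sup fun p : n.Partition => durfee p

lemma part_antitone {n : ℕ} (p : n.Partition) {i j : ℕ} (hij : i ≤ j) :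
    part p j ≤ part p i := by
  unfold part
  set l := p.parts.sort (· ≥ ·) with hl
  have hs : l.Pairwise (· ≥ ·) := p.parts.pairwise_sort _
  rcases lt_or_ge (j - 1) l.length with hj | hj
  · have hi : i - 1 < l.length := lt_of_le_of_lt (by omega) hj
    rw [List.getD_eq_getElem _ _ hi, List.getD_eq_getElem _ _ hj]
    rcases eq_or_lt_of_le (show i - 1 ≤ j - 1 by omega) with h | h
    · simp [h]
    · exact List.pairwise_iff_getElem.mp hs _ _ hi hj h
  · rw [List.getD_eq_default _ _ hj]; exact Nat.zero_le _

lemma part_pos_le {n : ℕ} (p : n.Partition) {i : ℕ} (h : 0 < part p i) :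
    i ≤ n := by
  have hlen : (p.parts.sort (· ≥ ·)).length ≤ n := by
    rw [Multiset.length_sort]
    calc Multiset.card p.parts = Multiset.card p.parts • 1 := by simp
    _ ≤ p.parts.sum := Multiset.card_nsmul_le_sum (fun x hx => p.parts_pos hx)
    _ = n := p.parts_sum
  by_contra hc
  have : (p.parts.sort (· ≥ ·)).length ≤ i - 1 := by omega
  unfold part at h
  rw [List.getD_eq_default _ _ this] at h
  omega

theorem maxRook_eq_durfee (n : ℕ) (p : n.Partition) :
    IsGreatest {k : ℕ | ∃ S : Finset (ℕ × ℕ), S.card = k ∧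
        (∀ c ∈ S, 1 ≤ c.1 ∧ 1 ≤ c.2 ∧ c.2 ≤ part p c.1) ∧
        (∀ c ∈ S, ∀ d ∈ S, c ≠ d → c.1 ≠ d.1 ∧ c.2 ≠ d.2)}
      (durfee p) := by
  classical
  set k := durfee p with hk
  have hspec0 := Nat.findGreatest_spec
    (P := fun k => ∀ i ∈ Finset.Icc 1 k, k + 1 ≤ part p i + i) (n := n) (m := 0)
    (Nat.zero_le n) (by intro i hi; rw [Finset.mem_Icc] at hi; omega)
  have hspec : ∀ i ∈ Finset.Icc 1 k, k + 1 ≤ part p i + i := hspec0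
  constructor
  · -- membership
    refine ⟨(Finset.Icc 1 k).image (fun i => (i, k + 1 - i)), ?_, ?_, ?_⟩
    · rw [Finset.card_image_of_injective _ (fun a b hab => (Prod.mk.injEq _ _ _ _ ▸ hab).1)]
      simp
    · intro c hc
      simp only [Finset.mem_image, Finset.mem_Icc] at hc
      obtain ⟨i, ⟨h1, h2⟩, rfl⟩ := hc
      have := hspec i (Finset.mem_Icc.mpr ⟨h1, h2⟩)
      exact ⟨h1, by omega, by show k + 1 - i ≤ part p i; omega⟩
    · intro c hc d hd hcd
      simp only [Finset.mem_image, Finset.mem_Icc] at hc hd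
      obtain ⟨i, ⟨hi1, hi2⟩, rfl⟩ := hc
      obtain ⟨j, ⟨hj1, hj2⟩, rfl⟩ := hd
      have : i ≠ j := fun h => hcd (by rw [h])
      constructor <;> simp <;> omega
  · -- upper bound
    rintro m ⟨S, hcard, hboard, hna⟩
    have hfst_inj : Set.InjOn Prod.fst (S : Set (ℕ × ℕ)) := by
      intro c hc d hd h
      by_contra hcd
      exact (hna c hc d hd hcd).1 h
    have hsnd_inj : Set.InjOn Prod.snd (S : Set (ℕ × ℕ)) := by
      intro c hc d hd h
      by_contra hcd
      exact (hna c hc d hd hcd).2 h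
    rw [hk]; unfold durfee
    refine @Nat.le_findGreatest _ _ (fun k => Classical.propDecidable _) _ ?_ ?_
    · -- m ≤ n
      rw [← hcard]
      have : S.image Prod.fst ⊆ Finset.Icc 1 n := by
        intro r hr
        simp only [Finset.mem_image] at hr
        obtain ⟨c, hc, rfl⟩ := hr
        obtain ⟨h1, h2, h3⟩ := hboard c hc
        exact Finset.mem_Icc.mpr ⟨h1, part_pos_le p (by omega)⟩
      calc S.card = (S.image Prod.fst).card := (Finset.card_image_of_injOn hfst_inj).symm
        _ ≤ (Finset.Icc 1 n).card := Finset.card_le_card this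
        _ = n := by simp
    · intro i hi
      rw [Finset.mem_Icc] at hi
      -- count rooks with row < i and row ≥ i
      have hle : (S.filter (fun c => c.1 < i)).card ≤ i - 1 := by
        have hsub : (S.filter (fun c => c.1 < i)).image Prod.fst ⊆ Finset.Icc 1 (i-1) := by
          intro r hr
          simp only [Finset.mem_image, Finset.mem_filter] at hr
          obtain ⟨c, ⟨hc, hlt⟩, rfl⟩ := hr
          exact Finset.mem_Icc.mpr ⟨(hboard c hc).1, by omega⟩
        calc (S.filter (fun c => c.1 < i)).card
            = ((S.filter (fun c => c.1 < i)).image Prod.fst).card :=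
              (Finset.card_image_of_injOn (hfst_inj.mono (Finset.filter_subset _ _))).symm
          _ ≤ (Finset.Icc 1 (i-1)).card := Finset.card_le_card hsub
          _ = i - 1 := by simp
      have hge : (S.filter (fun c => ¬ c.1 < i)).card ≤ part p i := by
        have hsub : (S.filter (fun c => ¬ c.1 < i)).image Prod.snd ⊆ Finset.Icc 1 (part p i) := by
          intro r hr
          simp only [Finset.mem_image, Finset.mem_filter] at hr
          obtain ⟨c, ⟨hc, hlt⟩, rfl⟩ := hr
          obtain ⟨h1, h2, h3⟩ := hboard c hc
          exact Finset.mem_Icc.mpr ⟨h2, le_trans h3 (part_antitone p (by omega))⟩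
        calc (S.filter (fun c => ¬ c.1 < i)).card
            = ((S.filter (fun c => ¬ c.1 < i)).image Prod.snd).card :=
              (Finset.card_image_of_injOn (hsnd_inj.mono (Finset.filter_subset _ _))).symm
          _ ≤ (Finset.Icc 1 (part p i)).card := Finset.card_le_card hsub
          _ = part p i := by simp
      have := Finset.card_filter_add_card_filter_not (s := S)
        (p := fun c => c.1 < i)
      omega
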